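/- arXiv:1909.03667 — 2 statements merged into one kernel-verified Lean document; each statement's English description precedes it below -/
import Mathlib

section
/- Let M > 0 and β ≥ 1 + M/(8π). Then the repulsive free energy F⁺_β is bounded from below on the set of admissible functions f on ℝ² with ∫_{ℝ²} f dx = M: there is a constant C ∈ ℝ such that F⁺_β[f] ≥ C for all such f. -/
open MeasureTheory Real Filter

noncomputable section

/-- The Euclidean plane ℝ². -/
abbrev E2 := EuclideanSpace ℝ (Fin 2)

/-- The probability density μ(x) = 1/(π (1+|x|²)²) on ℝ². -/
def mu2 (x : E2) : ℝ := 1 / (π * (1 + ‖x‖ ^ 2) ^ 2)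

/-- The external potential V(x) = −log μ(x) = 2 log(1+|x|²) + log π. -/
def Vpot (x : E2) : ℝ := 2 * Real.log (1 + ‖x‖ ^ 2) + Real.log π

/-- A function f on ℝ² is admissible if it is measurable, nonnegative a.e., integrable,
and ∫ f |log f|, ∫ V f and ∬ f(x) f(y) |log|x−y|| are all finite. -/
def Admissible (f : E2 → ℝ) : Prop :=
  Measurable f ∧ (∀ᵐ x : E2, 0 ≤ f x) ∧ Integrable f ∧
  Integrable (fun x => f x * |Real.log (f x)|) ∧
  Integrable (fun x => Vpot x * f x) ∧
  Integrable (fun p : E2 × E2 => f p.1 * f p.2 * |Real.log ‖p.1 - p.2‖|)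

/-- The repulsive free energy F⁺_β. -/
def Fplus (β : ℝ) (f : E2 → ℝ) : ℝ :=
  (∫ x, f x * Real.log (f x)) + β * (∫ x, Vpot x * f x)
    - (1 / (4 * π)) * ∫ p : E2 × E2, f p.1 * f p.2 * Real.log ‖p.1 - p.2‖

/-- The attractive free energy F⁻_β. -/
def Fminus (β : ℝ) (f : E2 → ℝ) : ℝ :=
  (∫ x, f x * Real.log (f x)) + β * (∫ x, Vpot x * f x)
    + (1 / (4 * π)) * ∫ p : E2 × E2, f p.1 * f p.2 * Real.log ‖p.1 - p.2‖

/-! Gibbs' inequality `f log f + V f ≥ f - e^{-V} = f - μ` bounds the entropy plus one copy of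
the potential energy from below by `M - ∫ μ`. Since `|x - y| ≤ (1 + |x|)(1 + |y|)` and
`(1 + t)² ≤ 2 (1 + t²)`, the kernel `log |x - y|` is at most `V x / 4 + V y / 4 + log 2`, so the
interaction energy is at most `(M / 2) ∫ V f + M² log 2`. After the factor `1 / (4π)` its
potential part is absorbed by the remaining `(β - 1) ∫ V f ≥ M / (8π) ∫ V f`. -/

theorem Real.sub_le_mul_log_sub_mul_log {a b : ℝ} (ha : 0 ≤ a) (hb : 0 < b) :
    a - b ≤ a * log a - a * log b := by
  rcases ha.eq_or_lt with rfl | ha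
  · simpa using hb.le
  have h := mul_le_mul_of_nonneg_left (log_le_sub_one_of_pos (div_pos hb ha)) ha.le
  rw [log_div hb.ne' ha.ne', mul_sub_one, mul_div_cancel₀ _ ha.ne'] at h
  linarith

section Gibbs

variable {α : Type*} [MeasurableSpace α] {ν : Measure α} {f W : α → ℝ}

theorem integral_sub_integral_exp_neg_le (hf₀ : 0 ≤ᵐ[ν] f) (hf : Integrable f ν)
    (hW : Integrable (fun x => exp (-W x)) ν) (hflog : Integrable (fun x => f x * log (f x)) ν)
    (hWf : Integrable (fun x => W x * f x) ν) :
    (∫ x, f x ∂ν) - ∫ x, exp (-W x) ∂ν ≤ (∫ x, f x * log (f x) ∂ν) + ∫ x, W x * f x ∂ν := by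
  rw [← integral_sub hf hW, ← integral_add hflog hWf]
  refine integral_mono_ae (hf.sub hW) (hflog.add hWf) ?_
  filter_upwards [hf₀] with x hx
  have h := sub_le_mul_log_sub_mul_log hx (exp_pos (-W x))
  rw [log_exp] at h
  linarith

end Gibbs

section Interaction

variable {α : Type*} [MeasurableSpace α] {ν : Measure α} [SFinite ν] {f g : α → ℝ}
  {K : α → α → ℝ}

theorem integral_mul_mul_le_of_le_add (hf₀ : 0 ≤ᵐ[ν] f) (hf : Integrable f ν)
    (hfg : Integrable (fun x => f x * g x) ν)
    (hK : Integrable (fun p : α × α => f p.1 * f p.2 * K p.1 p.2) (ν.prod ν))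
    (hKg : ∀ x y, K x y ≤ g x + g y) :
    ∫ p, f p.1 * f p.2 * K p.1 p.2 ∂(ν.prod ν) ≤ 2 * (∫ x, f x ∂ν) * ∫ x, f x * g x ∂ν := by
  have hsplit : (fun p : α × α => f p.1 * f p.2 * (g p.1 + g p.2))
      = fun p => f p.1 * g p.1 * f p.2 + f p.1 * (f p.2 * g p.2) := by
    ext p; ring
  calc ∫ p, f p.1 * f p.2 * K p.1 p.2 ∂(ν.prod ν)
      ≤ ∫ p, f p.1 * f p.2 * (g p.1 + g p.2) ∂(ν.prod ν) := by
        refine integral_mono_ae hK (hsplit ▸ (hfg.mul_prod hf).add (hf.mul_prod hfg)) ?_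
        filter_upwards [Measure.quasiMeasurePreserving_fst.ae hf₀,
          Measure.quasiMeasurePreserving_snd.ae hf₀] with p h₁ h₂
        exact mul_le_mul_of_nonneg_left (hKg p.1 p.2) (mul_nonneg h₁ h₂)
    _ = 2 * (∫ x, f x ∂ν) * ∫ x, f x * g x ∂ν := by
        rw [hsplit, integral_add (hfg.mul_prod hf) (hf.mul_prod hfg),
          integral_prod_mul (fun x => f x * g x) f, integral_prod_mul f (fun x => f x * g x)]
        ring

end Interaction

theorem Real.log_norm_sub_le_add_log_one_add_norm {G : Type*} [SeminormedAddCommGroup G] (x y : G) :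
    log ‖x - y‖ ≤ log (1 + ‖x‖) + log (1 + ‖y‖) := by
  have hprod : ‖x - y‖ ≤ (1 + ‖x‖) * (1 + ‖y‖) := by
    nlinarith [norm_sub_le x y, norm_nonneg x, norm_nonneg y]
  rw [← log_mul (by positivity) (by positivity)]
  rcases (norm_nonneg (x - y)).eq_or_lt with h | h
  · rw [← h, log_zero]
    exact log_nonneg (by nlinarith [norm_nonneg x, norm_nonneg y])
  · exact log_le_log h hprod

theorem Real.log_one_add_le {t : ℝ} (ht : 0 ≤ t) :
    log (1 + t) ≤ log (1 + t ^ 2) / 2 + log 2 / 2 := by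
  have h : log ((1 + t) ^ 2) ≤ log (2 * (1 + t ^ 2)) :=
    log_le_log (by positivity) (by nlinarith [sq_nonneg (1 - t)])
  rw [log_pow, log_mul two_ne_zero (by positivity)] at h
  push_cast at h
  linarith

theorem exp_neg_Vpot (x : E2) : exp (-Vpot x) = mu2 x := by
  rw [Vpot, mu2, exp_neg, exp_add, exp_log pi_pos, ← log_rpow (by positivity),
    exp_log (by positivity), one_div, rpow_two, mul_comm]

theorem Vpot_nonneg (x : E2) : 0 ≤ Vpot x := by
  have := log_nonneg (le_add_of_nonneg_right (sq_nonneg ‖x‖) : (1 : ℝ) ≤ 1 + ‖x‖ ^ 2)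
  have := log_nonneg (by linarith [pi_gt_three] : (1 : ℝ) ≤ π)
  unfold Vpot
  linarith

theorem log_norm_sub_le_Vpot (x y : E2) :
    log ‖x - y‖ ≤ (Vpot x / 4 + log 2 / 2) + (Vpot y / 4 + log 2 / 2) := by
  have hπ := log_nonneg (by linarith [pi_gt_three] : (1 : ℝ) ≤ π)
  have hx := log_one_add_le (norm_nonneg x)
  have hy := log_one_add_le (norm_nonneg y)
  have := log_norm_sub_le_add_log_one_add_norm x y
  unfold Vpot
  linarith

theorem integrable_mu2 : Integrable mu2 := by
  have hdim : (Module.finrank ℝ E2 : ℝ) < 4 := by norm_num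
  refine ((integrable_rpow_neg_one_add_norm_sq hdim).const_mul π⁻¹).congr
    (Eventually.of_forall fun x => ?_)
  simp only [mu2, one_div, mul_inv, show (-4 : ℝ) / 2 = -(2 : ℕ) by norm_num,
    rpow_neg (by positivity : (0 : ℝ) ≤ 1 + ‖x‖ ^ 2), rpow_natCast]

namespace Admissible

variable {f : E2 → ℝ}

theorem integrable_mul_log (hf : Admissible f) : Integrable (fun x => f x * log (f x)) := by
  refine hf.2.2.2.1.mono' (hf.1.mul (measurable_log.comp hf.1)).aestronglyMeasurable ?_
  filter_upwards [hf.2.1] with x hx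
  rw [norm_mul, norm_of_nonneg hx, norm_eq_abs]

theorem integrable_interaction (hf : Admissible f) :
    Integrable (fun p : E2 × E2 => f p.1 * f p.2 * log ‖p.1 - p.2‖) := by
  have hmeas : Measurable fun p : E2 × E2 => f p.1 * f p.2 * log ‖p.1 - p.2‖ := by
    have := hf.1; fun_prop
  refine hf.2.2.2.2.2.mono' hmeas.aestronglyMeasurable ?_
  rw [Measure.volume_eq_prod]
  filter_upwards [Measure.quasiMeasurePreserving_fst.ae hf.2.1,
    Measure.quasiMeasurePreserving_snd.ae hf.2.1] with p h₁ h₂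
  rw [norm_mul, norm_of_nonneg (mul_nonneg h₁ h₂), norm_eq_abs]

theorem integral_Vpot_mul_nonneg (hf : Admissible f) : 0 ≤ ∫ x, Vpot x * f x :=
  integral_nonneg_of_ae (by filter_upwards [hf.2.1] with x hx using mul_nonneg (Vpot_nonneg x) hx)

theorem integral_interaction_le (hf : Admissible f) :
    ∫ p : E2 × E2, f p.1 * f p.2 * log ‖p.1 - p.2‖
      ≤ 2 * (∫ x, f x) * ((∫ x, Vpot x * f x) / 4 + log 2 / 2 * ∫ x, f x) := by
  obtain ⟨-, hf₀, hf_int, -, hVf, -⟩ := id hf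
  have hfg_eq : (fun x => f x * (Vpot x / 4 + log 2 / 2))
      = fun x => Vpot x * f x / 4 + log 2 / 2 * f x := by
    ext x; ring
  have hfg : Integrable (fun x => f x * (Vpot x / 4 + log 2 / 2)) := by
    rw [hfg_eq]; exact (hVf.div_const 4).add (hf_int.const_mul _)
  have h := integral_mul_mul_le_of_le_add hf₀ hf_int hfg
    (Measure.volume_eq_prod E2 E2 ▸ hf.integrable_interaction) log_norm_sub_le_Vpot
  rwa [← Measure.volume_eq_prod, hfg_eq, integral_add (hVf.div_const 4) (hf_int.const_mul _),
    integral_div, integral_const_mul] at h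

end Admissible

theorem Fplus_bounded_below_general (M β : ℝ) (hβ : β ≥ 1 + M / (8 * π)) :
    ∃ C : ℝ, ∀ f : E2 → ℝ, Admissible f → (∫ x, f x) = M → C ≤ Fplus β f := by
  refine ⟨M - (∫ x, mu2 x) - log 2 / (4 * π) * M ^ 2, fun f hf hmass => ?_⟩
  have hentropy : M - ∫ x, mu2 x ≤ (∫ x, f x * log (f x)) + ∫ x, Vpot x * f x := by
    obtain ⟨-, hf₀, hf_int, -, hVf, -⟩ := id hf
    simpa only [exp_neg_Vpot, hmass] using integral_sub_integral_exp_neg_le hf₀ hf_int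
      (by simpa only [exp_neg_Vpot] using integrable_mu2) hf.integrable_mul_log hVf
  have hinteraction := hf.integral_interaction_le
  rw [hmass] at hinteraction
  have hβV := mul_le_mul_of_nonneg_right hβ hf.integral_Vpot_mul_nonneg
  have hscaled : 1 / (4 * π) * ∫ p : E2 × E2, f p.1 * f p.2 * log ‖p.1 - p.2‖
      ≤ M / (8 * π) * (∫ x, Vpot x * f x) + log 2 / (4 * π) * M ^ 2 := by
    calc _ ≤ 1 / (4 * π) * (2 * M * ((∫ x, Vpot x * f x) / 4 + log 2 / 2 * M)) := by
          gcongr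
      _ = _ := by field_simp; ring
  unfold Fplus
  linarith

/-- The repulsive free energy F⁺_β is bounded from below when β ≥ 1 + M/(8π). -/
theorem Fplus_bounded_below (M β : ℝ) (hM : 0 < M) (hβ : β ≥ 1 + M / (8 * π)) :
    ∃ C : ℝ, ∀ f : E2 → ℝ, Admissible f → (∫ x, f x) = M → C ≤ Fplus β f :=
  Fplus_bounded_below_general M β hβ
end
end

section
/- Let M > 0 and γ ∈ ℝ, and define J_{M,γ}[ψ] = (1/2) ∫_{ℝ²} |∇ψ|² dx + M ∫_{ℝ²} ψ μ dx + M log( ∫_{ℝ²} e^{−γ V − ψ} dx ) for ψ ∈ W^{1,2}_{loc}(ℝ²) with ∇ψ ∈ L²(ℝ²), ψ μ integrable and ∫_{ℝ²} e^{−γ V − ψ} dx < ∞. Then J_{M,γ} is convex on this set, and it is strictly convex up to additive constants: if J_{M,γ}[(ψ₁+ψ₂)/2] = (J_{M,γ}[ψ₁] + J_{M,γ}[ψ₂])/2, then ψ₁ − ψ₂ is constant almost everywhere. -/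
open MeasureTheory Real Filter

set_option maxHeartbeats 1000000

noncomputable section

/-- The functional J_{M,γ}[ψ] = ½∫|∇ψ|² + M∫ψμ + M log ∫ e^{−γV−ψ}. -/
def Jfun (M γ : ℝ) (ψ : E2 → ℝ) : ℝ :=
  (1 / 2) * (∫ x, ‖fderiv ℝ ψ x‖ ^ 2) + M * (∫ x, ψ x * mu2 x)
    + M * Real.log (∫ x, Real.exp (-γ * Vpot x - ψ x))

/-- J_{M,γ} is convex, and strictly convex up to additive constants. -/
theorem Jfun_convex (M γ : ℝ) (hM : 0 < M) (ψ₁ ψ₂ : E2 → ℝ)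
    (hd₁ : Differentiable ℝ ψ₁) (hd₂ : Differentiable ℝ ψ₂)
    (hg₁ : MemLp (fun x => fderiv ℝ ψ₁ x) 2) (hg₂ : MemLp (fun x => fderiv ℝ ψ₂ x) 2)
    (hi₁ : Integrable (fun x => ψ₁ x * mu2 x)) (hi₂ : Integrable (fun x => ψ₂ x * mu2 x))
    (he₁ : Integrable (fun x => Real.exp (-γ * Vpot x - ψ₁ x)))
    (he₂ : Integrable (fun x => Real.exp (-γ * Vpot x - ψ₂ x))) :
    Jfun M γ (fun x => (ψ₁ x + ψ₂ x) / 2) ≤ (Jfun M γ ψ₁ + Jfun M γ ψ₂) / 2 ∧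
    (Jfun M γ (fun x => (ψ₁ x + ψ₂ x) / 2) = (Jfun M γ ψ₁ + Jfun M γ ψ₂) / 2 →
      ∃ c : ℝ, (fun x => ψ₁ x - ψ₂ x) =ᵐ[volume] fun _ => c) := by
  -- continuity of Vpot
  have hVc : Continuous Vpot := by
    unfold Vpot
    have h1 : Continuous fun x : E2 => 1 + ‖x‖ ^ 2 := by continuity
    exact (continuous_const.mul (h1.log (fun x => by positivity))).add continuous_const
  -- the half-exponentials
  set a : E2 → ℝ := fun x => Real.exp ((-γ * Vpot x - ψ₁ x) / 2) with ha_def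
  set b : E2 → ℝ := fun x => Real.exp ((-γ * Vpot x - ψ₂ x) / 2) with hb_def
  have hac : Continuous a :=
    Real.continuous_exp.comp (((continuous_const.mul hVc).sub hd₁.continuous).div_const 2)
  have hbc : Continuous b :=
    Real.continuous_exp.comp (((continuous_const.mul hVc).sub hd₂.continuous).div_const 2)
  have hasq : ∀ x, a x ^ 2 = Real.exp (-γ * Vpot x - ψ₁ x) := fun x => by
    rw [sq, ha_def, ← Real.exp_add, add_halves]
  have hbsq : ∀ x, b x ^ 2 = Real.exp (-γ * Vpot x - ψ₂ x) := fun x => by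
    rw [sq, hb_def, ← Real.exp_add, add_halves]
  have hA2 : MemLp a 2 (volume : Measure E2) :=
    (memLp_two_iff_integrable_sq hac.aestronglyMeasurable).2 (by simp only [hasq]; exact he₁)
  have hB2 : MemLp b 2 (volume : Measure E2) :=
    (memLp_two_iff_integrable_sq hbc.aestronglyMeasurable).2 (by simp only [hbsq]; exact he₂)
  set A : Lp ℝ 2 (volume : Measure E2) := hA2.toLp a with hA_def
  set B : Lp ℝ 2 (volume : Measure E2) := hB2.toLp b with hB_def
  -- inner products
  have hinner_gen : ∀ (u v : E2 → ℝ) (hu : MemLp u 2 (volume : Measure E2))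
      (hv : MemLp v 2 (volume : Measure E2)),
      (inner ℝ (hu.toLp u) (hv.toLp v) : ℝ) = ∫ x, u x * v x := by
    intro u v hu hv
    rw [MeasureTheory.L2.inner_def]
    apply integral_congr_ae
    filter_upwards [hu.coeFn_toLp, hv.coeFn_toLp] with x h1 h2
    rw [h1, h2]; simp [RCLike.inner_apply]; ring
  have hIab : (inner ℝ A B : ℝ) = ∫ x, Real.exp (-γ * Vpot x - (ψ₁ x + ψ₂ x) / 2) := by
    rw [hA_def, hB_def, hinner_gen a b hA2 hB2]
    apply integral_congr_ae
    filter_upwards with x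
    rw [ha_def, hb_def]
    show Real.exp _ * Real.exp _ = _
    rw [← Real.exp_add]; congr 1; ring
  have hAA : ‖A‖ ^ 2 = ∫ x, Real.exp (-γ * Vpot x - ψ₁ x) := by
    rw [← real_inner_self_eq_norm_sq, hA_def, hinner_gen a a hA2 hA2]
    apply integral_congr_ae
    filter_upwards with x
    rw [← sq, hasq]
  have hBB : ‖B‖ ^ 2 = ∫ x, Real.exp (-γ * Vpot x - ψ₂ x) := by
    rw [← real_inner_self_eq_norm_sq, hB_def, hinner_gen b b hB2 hB2]
    apply integral_congr_ae
    filter_upwards with x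
    rw [← sq, hbsq]
  -- positivity of the exponential integrals
  have hpos : ∀ (ψ : E2 → ℝ), Integrable (fun x => Real.exp (-γ * Vpot x - ψ x)) →
      0 < ∫ x, Real.exp (-γ * Vpot x - ψ x) := by
    intro ψ hint
    rw [integral_pos_iff_support_of_nonneg (fun x => (Real.exp_pos _).le) hint]
    have hsup : Function.support (fun x : E2 => Real.exp (-γ * Vpot x - ψ x)) = Set.univ :=
      Set.eq_univ_of_forall (fun x => Real.exp_ne_zero _)
    rw [hsup]
    exact isOpen_univ.measure_pos volume ⟨0, trivial⟩
  have hIf : 0 < ∫ x, Real.exp (-γ * Vpot x - ψ₁ x) := hpos ψ₁ he₁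
  have hIg : 0 < ∫ x, Real.exp (-γ * Vpot x - ψ₂ x) := hpos ψ₂ he₂
  have hAn : 0 < ‖A‖ := by nlinarith [norm_nonneg A, hAA]
  have hBn : 0 < ‖B‖ := by nlinarith [norm_nonneg B, hBB]
  have hABpos : (0:ℝ) < inner ℝ A B := by
    rw [hIab]
    have h := hpos (fun x => (ψ₁ x + ψ₂ x) / 2)
    apply h
    have : (fun x => Real.exp (-γ * Vpot x - (ψ₁ x + ψ₂ x) / 2)) = fun x => a x * b x := by
      funext x; rw [ha_def, hb_def]
      show _ = Real.exp _ * Real.exp _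
      rw [← Real.exp_add]; congr 1; ring
    rw [this]
    have hsq1 := (memLp_two_iff_integrable_sq hac.aestronglyMeasurable).1 hA2
    have hsq2 := (memLp_two_iff_integrable_sq hbc.aestronglyMeasurable).1 hB2
    apply ((hsq1.add hsq2).div_const 2).mono' (hac.mul hbc).aestronglyMeasurable
    filter_upwards with x
    simp only [Pi.add_apply, Pi.mul_apply]
    rw [Real.norm_eq_abs]
    exact abs_le.2 ⟨by nlinarith [sq_nonneg (a x + b x)], by nlinarith [sq_nonneg (a x - b x)]⟩
  -- logarithms of norms
  have hlogA : Real.log ‖A‖ = Real.log (∫ x, Real.exp (-γ * Vpot x - ψ₁ x)) / 2 := by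
    have h : Real.log (‖A‖ ^ 2) = 2 * Real.log ‖A‖ := by
      rw [Real.log_pow]; norm_num
    rw [hAA] at h; linarith
  have hlogB : Real.log ‖B‖ = Real.log (∫ x, Real.exp (-γ * Vpot x - ψ₂ x)) / 2 := by
    have h : Real.log (‖B‖ ^ 2) = 2 * Real.log ‖B‖ := by
      rw [Real.log_pow]; norm_num
    rw [hBB] at h; linarith
  -- the log-term inequality
  have hL : Real.log (∫ x, Real.exp (-γ * Vpot x - (ψ₁ x + ψ₂ x) / 2)) ≤
      (Real.log (∫ x, Real.exp (-γ * Vpot x - ψ₁ x)) +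
        Real.log (∫ x, Real.exp (-γ * Vpot x - ψ₂ x))) / 2 := by
    rw [← hIab]
    calc Real.log (inner ℝ A B : ℝ) ≤ Real.log (‖A‖ * ‖B‖) :=
          Real.log_le_log hABpos (real_inner_le_norm A B)
      _ = Real.log ‖A‖ + Real.log ‖B‖ := Real.log_mul hAn.ne' hBn.ne'
      _ = _ := by rw [hlogA, hlogB]; ring
  -- gradient term
  have hfd : ∀ x, fderiv ℝ (fun y => (ψ₁ y + ψ₂ y) / 2) x =
      (2:ℝ)⁻¹ • (fderiv ℝ ψ₁ x + fderiv ℝ ψ₂ x) := by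
    intro x
    have h : (fun y => (ψ₁ y + ψ₂ y) / 2) = fun y => (2:ℝ)⁻¹ • (ψ₁ y + ψ₂ y) := by
      funext y; simp [smul_eq_mul]; ring
    rw [h, fderiv_fun_const_smul (f := fun y => ψ₁ y + ψ₂ y) ((hd₁ x).add (hd₂ x)), fderiv_fun_add (hd₁ x) (hd₂ x)]
  have hptw : ∀ x, ‖fderiv ℝ (fun y => (ψ₁ y + ψ₂ y) / 2) x‖ ^ 2 ≤
      (‖fderiv ℝ ψ₁ x‖ ^ 2 + ‖fderiv ℝ ψ₂ x‖ ^ 2) / 2 := by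
    intro x
    rw [hfd x]
    have h1 : ‖(2:ℝ)⁻¹ • (fderiv ℝ ψ₁ x + fderiv ℝ ψ₂ x)‖ ≤
        (2:ℝ)⁻¹ * (‖fderiv ℝ ψ₁ x‖ + ‖fderiv ℝ ψ₂ x‖) := by
      rw [norm_smul]
      simp only [norm_inv, Real.norm_ofNat]
      exact mul_le_mul_of_nonneg_left (norm_add_le _ _) (by norm_num)
    nlinarith [norm_nonneg (fderiv ℝ ψ₁ x), norm_nonneg (fderiv ℝ ψ₂ x),
      norm_nonneg ((2:ℝ)⁻¹ • (fderiv ℝ ψ₁ x + fderiv ℝ ψ₂ x)),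
      sq_nonneg (‖fderiv ℝ ψ₁ x‖ - ‖fderiv ℝ ψ₂ x‖)]
  have hInt1 : Integrable (fun x => ‖fderiv ℝ ψ₁ x‖ ^ 2) := by
    have h := hg₁.integrable_norm_rpow two_ne_zero ENNReal.ofNat_ne_top
    simpa [ENNReal.toReal_ofNat, Real.rpow_natCast] using h
  have hInt2 : Integrable (fun x => ‖fderiv ℝ ψ₂ x‖ ^ 2) := by
    have h := hg₂.integrable_norm_rpow two_ne_zero ENNReal.ofNat_ne_top
    simpa [ENNReal.toReal_ofNat, Real.rpow_natCast] using h
  have hG : (∫ x, ‖fderiv ℝ (fun y => (ψ₁ y + ψ₂ y) / 2) x‖ ^ 2) ≤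
      ((∫ x, ‖fderiv ℝ ψ₁ x‖ ^ 2) + ∫ x, ‖fderiv ℝ ψ₂ x‖ ^ 2) / 2 := by
    have step : (∫ x, ‖fderiv ℝ (fun y => (ψ₁ y + ψ₂ y) / 2) x‖ ^ 2) ≤
        ∫ x, (‖fderiv ℝ ψ₁ x‖ ^ 2 + ‖fderiv ℝ ψ₂ x‖ ^ 2) / 2 :=
      integral_mono_of_nonneg (ae_of_all _ fun x => sq_nonneg _)
        ((hInt1.add hInt2).div_const 2) (ae_of_all _ hptw)
    rw [integral_div, integral_add hInt1 hInt2] at step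
    exact step
  -- linear term
  have hT : (∫ x, ((ψ₁ x + ψ₂ x) / 2) * mu2 x) =
      ((∫ x, ψ₁ x * mu2 x) + ∫ x, ψ₂ x * mu2 x) / 2 := by
    have h : (fun x => ((ψ₁ x + ψ₂ x) / 2) * mu2 x) =
        fun x => (ψ₁ x * mu2 x + ψ₂ x * mu2 x) / 2 := by funext x; ring
    rw [h, integral_div, integral_add hi₁ hi₂]
  have hT2 : M * (∫ x, ((ψ₁ x + ψ₂ x) / 2) * mu2 x) =
      (M * (∫ x, ψ₁ x * mu2 x) + M * ∫ x, ψ₂ x * mu2 x) / 2 := by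
    rw [hT]; ring
  have hML2 : M * Real.log (∫ x, Real.exp (-γ * Vpot x - (ψ₁ x + ψ₂ x) / 2)) ≤
      (M * Real.log (∫ x, Real.exp (-γ * Vpot x - ψ₁ x)) +
        M * Real.log (∫ x, Real.exp (-γ * Vpot x - ψ₂ x))) / 2 := by
    have h := mul_le_mul_of_nonneg_left hL hM.le
    linarith [h, mul_div_assoc M (Real.log (∫ x, Real.exp (-γ * Vpot x - ψ₁ x)) +
      Real.log (∫ x, Real.exp (-γ * Vpot x - ψ₂ x))) 2,
      mul_add M (Real.log (∫ x, Real.exp (-γ * Vpot x - ψ₁ x)))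
        (Real.log (∫ x, Real.exp (-γ * Vpot x - ψ₂ x)))]
  constructor
  · simp only [Jfun]
    linarith [hG, hT2, hML2]
  · intro heq
    simp only [Jfun] at heq
    have hMLeq : M * Real.log (∫ x, Real.exp (-γ * Vpot x - (ψ₁ x + ψ₂ x) / 2)) =
        (M * Real.log (∫ x, Real.exp (-γ * Vpot x - ψ₁ x)) +
          M * Real.log (∫ x, Real.exp (-γ * Vpot x - ψ₂ x))) / 2 := by
      linarith [hG, hT2, hML2, heq]
    have hLeq : M * Real.log (∫ x, Real.exp (-γ * Vpot x - (ψ₁ x + ψ₂ x) / 2)) =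
        M * ((Real.log (∫ x, Real.exp (-γ * Vpot x - ψ₁ x)) +
          Real.log (∫ x, Real.exp (-γ * Vpot x - ψ₂ x))) / 2) := by
      rw [hMLeq]; ring
    have hLeq' := mul_left_cancel₀ hM.ne' hLeq
    -- equality in Cauchy–Schwarz
    have hlogeq : Real.log (inner ℝ A B : ℝ) = Real.log (‖A‖ * ‖B‖) := by
      rw [hIab, Real.log_mul hAn.ne' hBn.ne', hlogA, hlogB]
      linarith [hLeq']
    have hcs : (inner ℝ A B : ℝ) = ‖A‖ * ‖B‖ :=
      Real.log_injOn_pos (Set.mem_Ioi.2 hABpos)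
        (Set.mem_Ioi.2 (mul_pos hAn hBn)) hlogeq
    rw [inner_eq_norm_mul_iff_real] at hcs
    -- a.e. identity
    have h4 : ∀ᵐ x : E2, ‖B‖ * a x = ‖A‖ * b x := by
      have e1 := Lp.coeFn_smul (‖B‖) A
      have e2 := Lp.coeFn_smul (‖A‖) B
      have e3 := hA2.coeFn_toLp
      have e4 := hB2.coeFn_toLp
      filter_upwards [e1, e2, e3, e4] with x h1 h2 h3 h4
      have h5 : (↑↑(‖B‖ • A) : E2 → ℝ) x = (↑↑(‖A‖ • B) : E2 → ℝ) x := by rw [hcs]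
      rw [h1, h2] at h5
      rw [← h3, ← h4]; simpa [smul_eq_mul] using h5
    refine ⟨2 * Real.log (‖B‖ / ‖A‖), ?_⟩
    filter_upwards [h4] with x hx
    have hb' : b x = (‖B‖ / ‖A‖) * a x := by
      field_simp
      linarith [hx]
    have hlb : Real.log (b x) = Real.log (‖B‖ / ‖A‖) + Real.log (a x) := by
      rw [hb', Real.log_mul (by positivity) (Real.exp_ne_zero _)]
    rw [ha_def, hb_def] at hlb
    simp only [Real.log_exp] at hlb
    show ψ₁ x - ψ₂ x = 2 * Real.log (‖B‖ / ‖A‖)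
    linarith [hlb]
end
end
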